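/- arXiv:math/0305387 — 7 statements merged into one kernel-verified Lean document; each statement's English description precedes it below -/
import Mathlib

section
/- For every real λ > 0, ∫₀¹ 1/((1−t) + t·λ) · 1/(π·√(t·(1−t))) dt = λ^{−1/2}. -/
/-!
The function `t ↦ 2 / (π √λ) · arcsin √(λ t / ((1 - t) + t λ))` is a primitive of the integrand on
`(0, 1)` (it comes from the substitution `t = sin² θ`, which turns the integral into
`(2/π) ∫₀^{π/2} dθ / (cos² θ + λ sin² θ)`). It is continuous on `[0, 1]` with values `0` and
`1 / √λ` at the endpoints, and the integrand is nonnegative, hence integrable, so the fundamental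
theorem of calculus evaluates the integral.
-/

open MeasureTheory Set Real

theorem integral_Ioo_eq_sub_of_hasDerivAt_of_nonneg {f f' : ℝ → ℝ} {a b : ℝ} (hab : a ≤ b)
    (hcont : ContinuousOn f (Icc a b)) (hderiv : ∀ x ∈ Ioo a b, HasDerivAt f (f' x) x)
    (hpos : ∀ x ∈ Ioo a b, 0 ≤ f' x) :
    ∫ x in Ioo a b, f' x = f b - f a := by
  have hint : IntervalIntegrable f' volume a b :=
    (intervalIntegrable_iff_integrableOn_Ioc_of_le hab).2
      (intervalIntegral.integrableOn_deriv_of_nonneg hcont hderiv hpos)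
  rw [← integral_Ioc_eq_integral_Ioo, ← intervalIntegral.integral_of_le hab,
    intervalIntegral.integral_eq_sub_of_hasDerivAt_of_le hab hcont hderiv hint]

theorem HasDerivAt.arcsin_sqrt {f : ℝ → ℝ} {f' x : ℝ} (hf : HasDerivAt f f' x)
    (h0 : 0 < f x) (h1 : f x < 1) :
    HasDerivAt (fun t => arcsin (√(f t))) (f' / (2 * √(f x * (1 - f x)))) x := by
  have hs1 : √(f x) < 1 := (sqrt_lt_sqrt h0.le h1).trans_eq sqrt_one
  have hs0 : 0 < √(f x) := sqrt_pos.2 h0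
  refine ((hasDerivAt_arcsin (by linarith) hs1.ne).comp x (hf.sqrt h0.ne')).congr_deriv ?_
  rw [sq_sqrt h0.le, sqrt_mul h0.le]
  field_simp

theorem hasDerivAt_mul_div_one_sub_add_mul (l x : ℝ) (hx : (1 - x) + x * l ≠ 0) :
    HasDerivAt (fun t => l * t / ((1 - t) + t * l)) (l / ((1 - x) + x * l) ^ 2) x := by
  have hden : HasDerivAt (fun t => (1 - t) + t * l) (-1 + 1 * l) x :=
    ((hasDerivAt_id' x).const_sub 1).add ((hasDerivAt_id' x).mul_const l)
  refine (((hasDerivAt_id' x).const_mul l).div hden hx).congr_deriv ?_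
  field_simp
  ring

theorem one_sub_add_mul_pos {l t : ℝ} (hl : 0 < l) (ht : t ∈ Icc (0 : ℝ) 1) : 0 < (1 - t) + t * l := by
  obtain ⟨h0, h1⟩ := ht
  nlinarith [mul_pos hl hl, mul_nonneg h0 (mul_pos hl hl).le]

noncomputable def arcsineResolventPrimitive (l t : ℝ) : ℝ :=
  2 / (π * √l) * arcsin (√(l * t / ((1 - t) + t * l)))

theorem continuousOn_arcsineResolventPrimitive {l : ℝ} (hl : 0 < l) :
    ContinuousOn (arcsineResolventPrimitive l) (Icc 0 1) :=
  continuousOn_const.mul <| continuous_arcsin.comp_continuousOn <| ContinuousOn.sqrt <|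
    ContinuousOn.div (by fun_prop) (by fun_prop) fun _ ht => (one_sub_add_mul_pos hl ht).ne'

theorem hasDerivAt_arcsineResolventPrimitive {l x : ℝ} (hl : 0 < l) (hx : x ∈ Ioo (0 : ℝ) 1) :
    HasDerivAt (arcsineResolventPrimitive l)
      (1 / ((1 - x) + x * l) * (1 / (π * √(x * (1 - x))))) x := by
  obtain ⟨hx0, hx1⟩ := hx
  set D := (1 - x) + x * l with hD
  have hDpos : 0 < D := one_sub_add_mul_pos hl ⟨hx0.le, hx1.le⟩
  have hu0 : 0 < l * x / D := by positivity
  have hu1 : l * x / D < 1 := by rw [div_lt_one hDpos, hD]; nlinarith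
  have hu_one_sub : l * x / D * (1 - l * x / D) = l * (x * (1 - x)) / D ^ 2 := by
    field_simp
    rw [hD]
    ring
  refine (((hasDerivAt_mul_div_one_sub_add_mul l x hDpos.ne').arcsin_sqrt hu0 hu1).const_mul
    (2 / (π * √l))).congr_deriv ?_
  rw [← hD, hu_one_sub, sqrt_div' _ (sq_nonneg D), sqrt_sq hDpos.le, sqrt_mul hl.le]
  clear_value D
  have hsl : √l ^ 2 = l := sq_sqrt hl.le
  have : 0 < √(x * (1 - x)) := sqrt_pos.2 (by nlinarith)
  have : 0 < √l := sqrt_pos.2 hl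
  field_simp
  exact hsl.symm

theorem arcsineResolventPrimitive_zero (l : ℝ) : arcsineResolventPrimitive l 0 = 0 := by
  simp [arcsineResolventPrimitive]

theorem arcsineResolventPrimitive_one {l : ℝ} (hl : 0 < l) :
    arcsineResolventPrimitive l 1 = l ^ (-(1 : ℝ) / 2) := by
  have hsl : √l ≠ 0 := (sqrt_pos.2 hl).ne'
  rw [arcsineResolventPrimitive, show l * 1 / ((1 - 1) + 1 * l) = 1 by field_simp; ring,
    sqrt_one, arcsin_one, neg_div, rpow_neg hl.le, ← sqrt_eq_rpow]
  field_simp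

/-- For every `λ > 0`, `∫₀¹ 1/((1−t)+tλ) dμ(t) = λ^{-1/2}` where
`dμ(t) = dt/(π√(t(1−t)))` is the arcsine measure on `(0,1)`. -/
theorem arcsine_resolvent_integral (l : ℝ) (hl : 0 < l) :
    ∫ t in Set.Ioo (0 : ℝ) 1,
      (1 / ((1 - t) + t * l)) * (1 / (Real.pi * Real.sqrt (t * (1 - t))))
      = l ^ (-(1 : ℝ) / 2) := by
  have hpos : ∀ t ∈ Ioo (0 : ℝ) 1, 0 ≤ 1 / ((1 - t) + t * l) * (1 / (π * √(t * (1 - t)))) :=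
    fun t ht => mul_nonneg (one_div_nonneg.2 (one_sub_add_mul_pos hl (Ioo_subset_Icc_self ht)).le)
      (one_div_nonneg.2 (mul_nonneg pi_pos.le (sqrt_nonneg _)))
  rw [integral_Ioo_eq_sub_of_hasDerivAt_of_nonneg zero_le_one
    (continuousOn_arcsineResolventPrimitive hl)
    (fun t ht => hasDerivAt_arcsineResolventPrimitive hl ht) hpos,
    arcsineResolventPrimitive_one hl, arcsineResolventPrimitive_zero, sub_zero]
end

section
/- Let a, b > 0 and x ∈ ℝ. Then the infimum, over all pairs of measurable functions f, g : (0,1) → ℝ with f(t) + g(t) = x for μ-almost every t, of ∫₀¹ (a·f(t)²/t + b·g(t)²/(1−t)) dμ(t), equals √(a·b)·x², where dμ(t) = dt/(π√(t(1−t))). -/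
/-!
Sedrakyan's inequality `(f + g)² / (p + q) ≤ f² / p + g² / q` for `p, q > 0`, with equality when
`f : g = p : q`, applied pointwise with `p = t / a` and `q = (1 - t) / b`, shows that the infimum is
attained and equals `∫ x² / (t / a + (1 - t) / b) dμ(t)`. The substitution `t = u² / (1 + u²)`
carries the arcsine law to the measure `2 du / (π (1 + u²))` on `(0, ∞)` and turns this integral
into `(2 a b x² / π) ∫₀^∞ du / (a + b u²) = √(a b) x²`.
-/

open MeasureTheory Set Real
open scoped ENNReal

theorem sq_add_div_add_le {p q : ℝ} (hp : 0 < p) (hq : 0 < q) (f g : ℝ) :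
    (f + g) ^ 2 / (p + q) ≤ f ^ 2 / p + g ^ 2 / q := by
  simpa using Finset.sq_sum_div_le_sum_sq_div Finset.univ ![f, g] (g := ![p, q])
    (by simp [Fin.forall_fin_two, hp, hq])

theorem sq_div_add_sq_div_proportional {p q : ℝ} (hp : 0 < p) (hq : 0 < q) (x : ℝ) :
    (x * p / (p + q)) ^ 2 / p + (x - x * p / (p + q)) ^ 2 / q = x ^ 2 / (p + q) := by
  field_simp
  ring

theorem isLeast_lintegral_sq_div_add_sq_div {α : Type*} [MeasurableSpace α] (μ : Measure α)
    {p q : α → ℝ} (hp : Measurable p) (hq : Measurable q) (hp₀ : ∀ᵐ t ∂μ, 0 < p t)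
    (hq₀ : ∀ᵐ t ∂μ, 0 < q t) (x : ℝ) :
    IsLeast {r : ℝ≥0∞ | ∃ f g : α → ℝ, Measurable f ∧ Measurable g ∧
        (∀ᵐ t ∂μ, f t + g t = x) ∧ r = ∫⁻ t, ENNReal.ofReal (f t ^ 2 / p t + g t ^ 2 / q t) ∂μ}
      (∫⁻ t, ENNReal.ofReal (x ^ 2 / (p t + q t)) ∂μ) := by
  constructor
  · refine ⟨fun t => x * p t / (p t + q t), fun t => x - x * p t / (p t + q t),
      by fun_prop, by fun_prop, .of_forall fun t => add_sub_cancel _ _, lintegral_congr_ae ?_⟩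
    filter_upwards [hp₀, hq₀] with t hpt hqt
    rw [sq_div_add_sq_div_proportional hpt hqt]
  · rintro r ⟨f, g, -, -, hfg, rfl⟩
    refine lintegral_mono_ae ?_
    filter_upwards [hp₀, hq₀, hfg] with t hpt hqt hfgt
    rw [← hfgt]
    exact ENNReal.ofReal_le_ofReal (sq_add_div_add_le hpt hqt _ _)

theorem hasDerivAt_sq_div_one_add_sq (u : ℝ) :
    HasDerivAt (fun u : ℝ => u ^ 2 / (1 + u ^ 2)) (2 * u / (1 + u ^ 2) ^ 2) u := by
  refine ((hasDerivAt_pow 2 u).fun_div ((hasDerivAt_pow 2 u).const_add 1)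
    (by positivity)).congr_deriv ?_
  field_simp
  ring

theorem strictMonoOn_sq_div_one_add_sq :
    StrictMonoOn (fun u : ℝ => u ^ 2 / (1 + u ^ 2)) (Ici 0) := by
  intro u hu v hv huv
  simp only [mem_Ici] at hu hv
  rw [div_lt_div_iff₀ (by positivity) (by positivity)]
  nlinarith [mul_lt_mul'' huv huv hu hu]

theorem image_sq_div_one_add_sq_Ioi : (fun u : ℝ => u ^ 2 / (1 + u ^ 2)) '' Ioi 0 = Ioo 0 1 := by
  ext t
  constructor
  · rintro ⟨u, hu : 0 < u, rfl⟩
    exact ⟨by positivity, (div_lt_one (by positivity)).2 (by linarith)⟩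
  · rintro ⟨ht₀, ht₁⟩
    have hs : 0 < t / (1 - t) := div_pos ht₀ (sub_pos.2 ht₁)
    refine ⟨√(t / (1 - t)), sqrt_pos.2 hs, ?_⟩
    dsimp only
    rw [sq_sqrt hs.le]
    field_simp
    ring

noncomputable def arcsineMeasure : Measure ℝ :=
  (volume.restrict (Ioo (0 : ℝ) 1)).withDensity
    fun t => ENNReal.ofReal (1 / (π * √(t * (1 - t))))

theorem lintegral_arcsineMeasure_eq_lintegral_Ioi (F : ℝ → ℝ≥0∞) :
    ∫⁻ t, F t ∂arcsineMeasure =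
      ∫⁻ u in Ioi 0, ENNReal.ofReal (2 / (π * (1 + u ^ 2))) * F (u ^ 2 / (1 + u ^ 2)) := by
  rw [arcsineMeasure, lintegral_withDensity_eq_lintegral_mul_non_measurable _ (by fun_prop)
      (.of_forall fun _ => ENNReal.ofReal_lt_top), ← image_sq_div_one_add_sq_Ioi,
    lintegral_image_eq_lintegral_abs_deriv_mul measurableSet_Ioi
      (fun u _ => (hasDerivAt_sq_div_one_add_sq u).hasDerivWithinAt)
      (strictMonoOn_sq_div_one_add_sq.injOn.mono Ioi_subset_Ici_self)]
  refine setLIntegral_congr_fun measurableSet_Ioi fun u (hu : 0 < u) => ?_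
  have hsqrt : √(u ^ 2 / (1 + u ^ 2) * (1 - u ^ 2 / (1 + u ^ 2))) = u / (1 + u ^ 2) := by
    rw [← sqrt_sq (by positivity : 0 ≤ u / (1 + u ^ 2))]
    congr 1
    field_simp
    ring
  rw [Pi.mul_apply, ← mul_assoc, ← ENNReal.ofReal_mul (abs_nonneg _), hsqrt,
    abs_of_pos (by positivity)]
  congr 2
  field_simp

theorem lintegral_Ioi_inv_add_mul_sq {a b : ℝ} (ha : 0 < a) (hb : 0 < b) :
    ∫⁻ u in Ioi 0, ENNReal.ofReal (a + b * u ^ 2)⁻¹ = ENNReal.ofReal (π / (2 * √(a * b))) := by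
  set k := √(b / a)
  have hk : 0 < k := sqrt_pos.2 (div_pos hb ha)
  have hak : a * k = √(a * b) := by
    rw [← sqrt_sq ha.le, ← sqrt_mul (sq_nonneg a), sqrt_sq ha.le]
    congr 1
    field_simp
  have hscale : ∀ u, (a + b * u ^ 2)⁻¹ = a⁻¹ * (1 + (k * u) ^ 2)⁻¹ := fun u => by
    rw [mul_pow, sq_sqrt (div_pos hb ha).le]; field_simp
  simp_rw [hscale]
  rw [← ofReal_integral_eq_lintegral_ofReal
      ((integrable_inv_one_add_sq.comp_mul_left' hk.ne').integrableOn.const_mul a⁻¹)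
      (.of_forall fun u => by positivity),
    integral_const_mul, integral_comp_mul_left_Ioi (fun v => (1 + v ^ 2)⁻¹) 0 hk,
    mul_zero, integral_Ioi_inv_one_add_sq, arctan_zero, sub_zero, smul_eq_mul, ← hak]
  congr 1
  field_simp

theorem lintegral_arcsineMeasure_div_weighted_mean {a b : ℝ} (ha : 0 < a) (hb : 0 < b)
    {c : ℝ} (hc : 0 ≤ c) :
    ∫⁻ t, ENNReal.ofReal (c / (t / a + (1 - t) / b)) ∂arcsineMeasure =
      ENNReal.ofReal (√(a * b) * c) := by
  have hintegrand : ∀ u : ℝ, ENNReal.ofReal (2 / (π * (1 + u ^ 2))) *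
      ENNReal.ofReal (c / (u ^ 2 / (1 + u ^ 2) / a + (1 - u ^ 2 / (1 + u ^ 2)) / b)) =
      ENNReal.ofReal (2 * a * b * c / π) * ENNReal.ofReal (a + b * u ^ 2)⁻¹ := fun u => by
    rw [← ENNReal.ofReal_mul (by positivity), ← ENNReal.ofReal_mul (by positivity),
      one_sub_div (by positivity), add_sub_cancel_right]
    congr 1
    field_simp
    ring
  simp_rw [lintegral_arcsineMeasure_eq_lintegral_Ioi, hintegrand]
  rw [lintegral_const_mul' _ _ ENNReal.ofReal_ne_top, lintegral_Ioi_inv_add_mul_sq ha hb,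
    ← ENNReal.ofReal_mul (by positivity)]
  have hab : √(a * b) ^ 2 = a * b := sq_sqrt (by positivity)
  have hsqrt_pos : 0 < √(a * b) := by positivity
  congr 1
  field_simp
  linear_combination -c * hab

/-- Scalar Pusz–Woronowicz formula: for `a, b > 0` and `x ∈ ℝ`, the infimum over
all measurable decompositions `f + g = x` (μ-a.e.) of
`∫ (a f(t)²/t + b g(t)²/(1−t)) dμ(t)` equals `√(ab)·x²`, where `μ` is the
arcsine measure `dμ(t) = dt/(π√(t(1−t)))` on `(0,1)`. -/
theorem puszWoronowicz_scalar (a b : ℝ) (ha : 0 < a) (hb : 0 < b) (x : ℝ) :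
    sInf {r : ℝ≥0∞ | ∃ f g : ℝ → ℝ, Measurable f ∧ Measurable g ∧
        (∀ᵐ t ∂((volume.restrict (Set.Ioo (0 : ℝ) 1)).withDensity
            (fun t => ENNReal.ofReal (1 / (Real.pi * Real.sqrt (t * (1 - t)))))),
          f t + g t = x) ∧
        r = ∫⁻ t, ENNReal.ofReal (a * (f t) ^ 2 / t + b * (g t) ^ 2 / (1 - t))
            ∂((volume.restrict (Set.Ioo (0 : ℝ) 1)).withDensity
              (fun t => ENNReal.ofReal (1 / (Real.pi * Real.sqrt (t * (1 - t))))))}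
      = ENNReal.ofReal (Real.sqrt (a * b) * x ^ 2) := by
  have hmem : ∀ᵐ t ∂arcsineMeasure, t ∈ Ioo 0 1 :=
    (withDensity_absolutelyContinuous _ _).ae_le (ae_restrict_mem measurableSet_Ioo)
  have hp : ∀ᵐ t ∂arcsineMeasure, 0 < t / a := hmem.mono fun t ht => div_pos ht.1 ha
  have hq : ∀ᵐ t ∂arcsineMeasure, 0 < (1 - t) / b :=
    hmem.mono fun t ht => div_pos (sub_pos.2 ht.2) hb
  have hweight : ∀ c y s : ℝ, c * y ^ 2 / s = y ^ 2 / (s / c) := fun c y s => by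
    rw [div_div_eq_mul_div, mul_comm]
  simp only [hweight]
  exact (isLeast_lintegral_sq_div_add_sq_div arcsineMeasure (p := fun t => t / a)
    (q := fun t => (1 - t) / b) (by fun_prop) (by fun_prop) hp hq x).csInf_eq.trans
    (lintegral_arcsineMeasure_div_weighted_mean ha hb (sq_nonneg x))
end

section
/- Let ν be a σ-finite measure on a measurable space and let g, h be measurable functions with g(ω), h(ω) > 0 for ν-a.e. ω, and let k be a real-valued measurable function with ∫ k²·(g·h/(g+h)) dν < ∞. Then the infimum, over all measurable decompositions k = f₁ + f₂, of ∫ f₁²·g dν + ∫ f₂²·h dν equals ∫ k²/(g⁻¹ + h⁻¹) dν = ∫ k²·g·h/(g+h) dν. -/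
/-!
Pointwise, `(a + b)² · gh/(g + h) ≤ a² g + b² h` is equivalent to `0 ≤ (a g - b h)²`, so every
decomposition `k = f₁ + f₂` costs at least `∫ k² · gh/(g + h)`, with equality when `f₁ g = f₂ h`,
i.e. for the measurable decomposition `f₁ = k h/(g + h)`, `f₂ = k g/(g + h)`.
-/

open MeasureTheory
open scoped ENNReal

section Pointwise

variable {a b g h : ℝ}

lemma add_sq_mul_mul_div_add_le (hg : 0 ≤ g) (hh : 0 ≤ h) :
    (a + b) ^ 2 * (g * h / (g + h)) ≤ a ^ 2 * g + b ^ 2 * h := by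
  rcases (add_nonneg hg hh).eq_or_lt with hgh | hgh
  · rw [← hgh, div_zero, mul_zero]
    positivity
  rw [mul_div_assoc', div_le_iff₀ hgh]
  nlinarith [sq_nonneg (a * g - b * h)]

lemma div_inv_add_inv (k : ℝ) (hg : g ≠ 0) (hh : h ≠ 0) :
    k / (g⁻¹ + h⁻¹) = k * (g * h / (g + h)) := by
  rw [div_eq_mul_inv, inv_add_inv hg hh, inv_div]

lemma mul_div_add_sq_mul_add_sub_sq_mul (k : ℝ) (hgh : g + h ≠ 0) :
    (k * h / (g + h)) ^ 2 * g + (k - k * h / (g + h)) ^ 2 * h = k ^ 2 * (g * h / (g + h)) := by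
  field_simp
  ring

end Pointwise

section Integral

variable {Ω : Type*} [MeasurableSpace Ω] {ν : Measure Ω} {g h k : Ω → ℝ}

lemma lintegral_sq_mul_mul_div_add_le {f₁ f₂ : Ω → ℝ} (hf₁ : Measurable f₁) (hg : Measurable g)
    (hg0 : ∀ᵐ ω ∂ν, 0 ≤ g ω) (hh0 : ∀ᵐ ω ∂ν, 0 ≤ h ω) (hk : ∀ᵐ ω ∂ν, k ω = f₁ ω + f₂ ω) :
    ∫⁻ ω, ENNReal.ofReal (k ω ^ 2 * (g ω * h ω / (g ω + h ω))) ∂ν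
      ≤ (∫⁻ ω, ENNReal.ofReal (f₁ ω ^ 2 * g ω) ∂ν) + ∫⁻ ω, ENNReal.ofReal (f₂ ω ^ 2 * h ω) ∂ν := by
  rw [← lintegral_add_left (by fun_prop)]
  refine lintegral_mono_ae ?_
  filter_upwards [hg0, hh0, hk] with ω hgω hhω hkω
  rw [hkω]
  exact (ENNReal.ofReal_le_ofReal (add_sq_mul_mul_div_add_le hgω hhω)).trans ENNReal.ofReal_add_le

lemma lintegral_sq_mul_mul_div_add_eq (hk : Measurable k) (hg : Measurable g) (hh : Measurable h)
    (hg0 : ∀ᵐ ω ∂ν, 0 < g ω) (hh0 : ∀ᵐ ω ∂ν, 0 < h ω) :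
    (∫⁻ ω, ENNReal.ofReal ((k ω * h ω / (g ω + h ω)) ^ 2 * g ω) ∂ν)
        + ∫⁻ ω, ENNReal.ofReal ((k ω - k ω * h ω / (g ω + h ω)) ^ 2 * h ω) ∂ν
      = ∫⁻ ω, ENNReal.ofReal (k ω ^ 2 * (g ω * h ω / (g ω + h ω))) ∂ν := by
  rw [← lintegral_add_left (by fun_prop)]
  refine lintegral_congr_ae ?_
  filter_upwards [hg0, hh0] with ω hgω hhω
  rw [← ENNReal.ofReal_add (by positivity) (by positivity),
    mul_div_add_sq_mul_add_sub_sq_mul _ (by positivity)]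

end Integral

theorem sum_weighted_L2_norm_general {Ω : Type*} [MeasurableSpace Ω] (ν : Measure Ω)
    (g h k : Ω → ℝ) (hg : Measurable g) (hh : Measurable h)
    (hk : Measurable k)
    (hgpos : ∀ᵐ ω ∂ν, 0 < g ω) (hhpos : ∀ᵐ ω ∂ν, 0 < h ω) :
    sInf {r : ℝ≥0∞ | ∃ f₁ f₂ : Ω → ℝ, Measurable f₁ ∧ Measurable f₂ ∧
        (∀ ω, k ω = f₁ ω + f₂ ω) ∧
        r = (∫⁻ ω, ENNReal.ofReal ((f₁ ω) ^ 2 * g ω) ∂ν)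
            + ∫⁻ ω, ENNReal.ofReal ((f₂ ω) ^ 2 * h ω) ∂ν}
      = ∫⁻ ω, ENNReal.ofReal ((k ω) ^ 2 / ((g ω)⁻¹ + (h ω)⁻¹)) ∂ν ∧
    (∫⁻ ω, ENNReal.ofReal ((k ω) ^ 2 / ((g ω)⁻¹ + (h ω)⁻¹)) ∂ν
        = ∫⁻ ω, ENNReal.ofReal ((k ω) ^ 2 * (g ω * h ω / (g ω + h ω))) ∂ν) := by
  have hharm : ∫⁻ ω, ENNReal.ofReal ((k ω) ^ 2 / ((g ω)⁻¹ + (h ω)⁻¹)) ∂ν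
      = ∫⁻ ω, ENNReal.ofReal ((k ω) ^ 2 * (g ω * h ω / (g ω + h ω))) ∂ν := by
    refine lintegral_congr_ae ?_
    filter_upwards [hgpos, hhpos] with ω hgω hhω
    rw [div_inv_add_inv _ hgω.ne' hhω.ne']
  refine ⟨?_, hharm⟩
  rw [hharm]
  refine (IsLeast.isGLB ⟨?_, ?_⟩).sInf_eq
  · set f₁ : Ω → ℝ := fun ω ↦ k ω * h ω / (g ω + h ω)
    exact ⟨f₁, k - f₁, by fun_prop, by fun_prop, fun ω ↦ by simp,
      (lintegral_sq_mul_mul_div_add_eq hk hg hh hgpos hhpos).symm⟩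
  · rintro r ⟨f₁, f₂, hf₁, -, hsum, rfl⟩
    exact lintegral_sq_mul_mul_div_add_le hf₁ hg (hgpos.mono fun _ ↦ le_of_lt)
      (hhpos.mono fun _ ↦ le_of_lt) (.of_forall hsum)

/-- Norm in the sum of two weighted `L²` spaces: if `g, h > 0` a.e. and
`∫ k²·gh/(g+h) dν < ∞`, then the infimum over measurable decompositions
`k = f₁ + f₂` of `∫ f₁² g dν + ∫ f₂² h dν` equals
`∫ k²/(g⁻¹+h⁻¹) dν = ∫ k²·gh/(g+h) dν`. -/
theorem sum_weighted_L2_norm {Ω : Type*} [MeasurableSpace Ω] (ν : Measure Ω)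
    [SigmaFinite ν] (g h k : Ω → ℝ) (hg : Measurable g) (hh : Measurable h)
    (hk : Measurable k)
    (hgpos : ∀ᵐ ω ∂ν, 0 < g ω) (hhpos : ∀ᵐ ω ∂ν, 0 < h ω)
    (hfin : ∫⁻ ω, ENNReal.ofReal ((k ω) ^ 2 * (g ω * h ω / (g ω + h ω))) ∂ν ≠ ∞) :
    sInf {r : ℝ≥0∞ | ∃ f₁ f₂ : Ω → ℝ, Measurable f₁ ∧ Measurable f₂ ∧
        (∀ ω, k ω = f₁ ω + f₂ ω) ∧
        r = (∫⁻ ω, ENNReal.ofReal ((f₁ ω) ^ 2 * g ω) ∂ν)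
            + ∫⁻ ω, ENNReal.ofReal ((f₂ ω) ^ 2 * h ω) ∂ν}
      = ∫⁻ ω, ENNReal.ofReal ((k ω) ^ 2 / ((g ω)⁻¹ + (h ω)⁻¹)) ∂ν ∧
    (∫⁻ ω, ENNReal.ofReal ((k ω) ^ 2 / ((g ω)⁻¹ + (h ω)⁻¹)) ∂ν
        = ∫⁻ ω, ENNReal.ofReal ((k ω) ^ 2 * (g ω * h ω / (g ω + h ω))) ∂ν) :=
  sum_weighted_L2_norm_general ν g h k hg hh hk hgpos hhpos
end

section
/- For every real δ with 0 < δ ≤ 1/2, ∫_{δ}^{1/2} ∫_{1/2}^{1−δ} 1/(t·s + (1−t)·(1−s)) dμ(t) dμ(s) ≤ (16/π²)·ln(1/δ), where dμ(t) = dt/(π·√(t·(1−t))). -/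
/-!
Write `u = 1 - s`. On the rectangle the kernel is at least `(t + u) / 2` and the arcsine density
is at most `√2 / (π √x)` at `x = t` and at `x = u`, so the integrand is at most
`4 / (π² √u) · 1 / ((t + u) √t)`. Since `(2 / √u) arctan √(t / u)` is an antiderivative of
`1 / ((t + u) √t)`, the inner integral is at most `4 / (π u)`, and integrating over `s` leaves
`(4 / π) log (1 / (2δ))`. Finally `4 / π ≤ 16 / π²` because `π ≤ 4`.
-/

open MeasureTheory Real Set

noncomputable def arcsineDensity (x : ℝ) : ℝ := 1 / (π * √(x * (1 - x)))

theorem arcsineDensity_nonneg (x : ℝ) : 0 ≤ arcsineDensity x := by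
  unfold arcsineDensity; positivity

theorem arcsineDensity_one_sub (x : ℝ) : arcsineDensity (1 - x) = arcsineDensity x := by
  rw [arcsineDensity, arcsineDensity, sub_sub_cancel, mul_comm (1 - x)]

theorem arcsineDensity_le {x : ℝ} (hx0 : 0 < x) (hx : x ≤ 1 / 2) :
    arcsineDensity x ≤ √2 / (π * √x) := by
  have : √x / √2 ≤ √(x * (1 - x)) := by
    rw [← sqrt_div' _ two_pos.le]
    exact sqrt_le_sqrt (by nlinarith)
  calc arcsineDensity x ≤ 1 / (π * (√x / √2)) := by unfold arcsineDensity; gcongr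
    _ = √2 / (π * √x) := by field_simp

theorem half_add_le_mul_one_sub_add {t u : ℝ} (ht : 0 ≤ t) (ht' : t ≤ 1 / 2) (hu : 0 ≤ u)
    (hu' : u ≤ 1 / 2) : (t + u) / 2 ≤ t * (1 - u) + (1 - t) * u := by
  nlinarith

theorem kernel_mul_arcsineDensity_nonneg {t s : ℝ} (ht : 0 ≤ t) (ht' : t ≤ 1) (hs : 0 ≤ s)
    (hs' : s ≤ 1) :
    0 ≤ 1 / (t * s + (1 - t) * (1 - s)) * arcsineDensity t * arcsineDensity s := by
  have hkernel : 0 ≤ t * s + (1 - t) * (1 - s) :=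
    add_nonneg (mul_nonneg ht hs) (mul_nonneg (sub_nonneg.2 ht') (sub_nonneg.2 hs'))
  exact mul_nonneg (mul_nonneg (one_div_nonneg.2 hkernel) (arcsineDensity_nonneg t))
    (arcsineDensity_nonneg s)

theorem kernel_mul_arcsineDensity_le {t s : ℝ} (ht : 0 < t) (ht' : t ≤ 1 / 2) (hs : 1 / 2 ≤ s)
    (hs' : s < 1) :
    1 / (t * s + (1 - t) * (1 - s)) * arcsineDensity t * arcsineDensity s
      ≤ 4 / π ^ 2 / √(1 - s) * (1 / ((t + (1 - s)) * √t)) := by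
  obtain ⟨u, rfl⟩ : ∃ u, s = 1 - u := ⟨1 - s, (sub_sub_cancel 1 s).symm⟩
  have hu : 0 < u := by linarith
  have hu' : u ≤ 1 / 2 := by linarith
  rw [sub_sub_cancel, arcsineDensity_one_sub]
  calc 1 / (t * (1 - u) + (1 - t) * u) * arcsineDensity t * arcsineDensity u
      ≤ 1 / ((t + u) / 2) * (√2 / (π * √t)) * (√2 / (π * √u)) := by
        have := half_add_le_mul_one_sub_add ht.le ht' hu.le hu'
        gcongr
        · exact arcsineDensity_nonneg u
        · exact arcsineDensity_nonneg t
        · exact arcsineDensity_le ht ht'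
        · exact arcsineDensity_le hu hu'
    _ = 4 / π ^ 2 / √u * (1 / ((t + u) * √t)) := by
        field_simp
        rw [sq_sqrt two_pos.le]
        ring

theorem continuousOn_one_div_add_mul_sqrt {u : ℝ} (hu : 0 ≤ u) :
    ContinuousOn (fun t => 1 / ((t + u) * √t)) (Ioi 0) :=
  continuousOn_const.div (by fun_prop) fun t (ht : 0 < t) => by positivity

theorem hasDerivAt_arctan_sqrt_div {u t : ℝ} (hu : 0 < u) (ht : 0 < t) :
    HasDerivAt (fun x => 2 / √u * arctan (√x / √u)) (1 / ((t + u) * √t)) t := by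
  have hsqrt : HasDerivAt (fun x => √x / √u) (1 / (2 * √t) / √u) t :=
    (hasDerivAt_sqrt ht.ne').div_const _
  refine (hsqrt.arctan.const_mul (2 / √u)).congr_deriv ?_
  have : 0 < √t := sqrt_pos.2 ht
  have : 0 < √u := sqrt_pos.2 hu
  rw [div_pow, sq_sqrt ht.le]
  field_simp
  rw [sq_sqrt hu.le]
  ring

theorem integral_one_div_add_mul_sqrt_le {u a b : ℝ} (hu : 0 < u) (ha : 0 < a) (hab : a ≤ b) :
    ∫ t in a..b, 1 / ((t + u) * √t) ≤ π / √u := by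
  have hpos : ∀ t ∈ uIcc a b, 0 < t := fun t ht =>
    ha.trans_le (by rw [uIcc_of_le hab] at ht; exact ht.1)
  rw [intervalIntegral.integral_eq_sub_of_hasDerivAt
    (fun t ht => hasDerivAt_arctan_sqrt_div hu (hpos t ht))
    ((continuousOn_one_div_add_mul_sqrt hu.le).mono hpos).intervalIntegrable, ← mul_sub]
  have := arctan_lt_pi_div_two (√b / √u)
  have := arctan_nonneg.2 (by positivity : 0 ≤ √a / √u)
  calc 2 / √u * (arctan (√b / √u) - arctan (√a / √u)) ≤ 2 / √u * (π / 2) := by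
        gcongr
        linarith
    _ = π / √u := by ring

theorem integral_inv_one_sub {a b : ℝ} (hb : b < 1) (hab : a ≤ b) :
    ∫ s in a..b, (1 - s)⁻¹ = log ((1 - a) / (1 - b)) := by
  rw [intervalIntegral.integral_comp_sub_left (fun x => x⁻¹), integral_inv_of_pos] <;> linarith

theorem integral_Icc_eq_intervalIntegral {E : Type*} [NormedAddCommGroup E] [NormedSpace ℝ E]
    {μ : Measure ℝ} [NullSingletonClass μ] {f : ℝ → E} {a b : ℝ} (hab : a ≤ b) :
    ∫ x in Icc a b, f x ∂μ = ∫ x in a..b, f x ∂μ := by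
  rw [integral_Icc_eq_integral_Ioc, intervalIntegral.integral_of_le hab]

theorem setIntegral_Icc_le_of_le {μ : Measure ℝ} [IsLocallyFiniteMeasure μ] {f g : ℝ → ℝ}
    {a b : ℝ} (hf : ∀ x ∈ Icc a b, 0 ≤ f x) (hg : ContinuousOn g (Icc a b))
    (hfg : ∀ x ∈ Icc a b, f x ≤ g x) :
    ∫ x in Icc a b, f x ∂μ ≤ ∫ x in Icc a b, g x ∂μ :=
  integral_mono_of_nonneg (ae_restrict_of_forall_mem measurableSet_Icc hf)
    hg.integrableOn_Icc (ae_restrict_of_forall_mem measurableSet_Icc hfg)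

theorem setIntegral_kernel_mul_arcsineDensity_le {δ s : ℝ} (hδ : 0 < δ) (hδ' : δ ≤ 1 / 2)
    (hs : 1 / 2 ≤ s) (hs' : s < 1) :
    ∫ t in Icc δ (1 / 2), 1 / (t * s + (1 - t) * (1 - s)) * arcsineDensity t * arcsineDensity s
      ≤ 4 / π * (1 - s)⁻¹ := by
  have hu : 0 < 1 - s := by linarith
  calc _ ≤ ∫ t in Icc δ (1 / 2), 4 / π ^ 2 / √(1 - s) * (1 / ((t + (1 - s)) * √t)) :=
        setIntegral_Icc_le_of_le
          (fun t ht => kernel_mul_arcsineDensity_nonneg (hδ.le.trans ht.1) (by linarith [ht.2])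
            (by linarith) hs'.le)
          (continuousOn_const.mul ((continuousOn_one_div_add_mul_sqrt hu.le).mono
            fun t ht => hδ.trans_le ht.1))
          (fun t ht => kernel_mul_arcsineDensity_le (hδ.trans_le ht.1) ht.2 hs hs')
    _ = 4 / π ^ 2 / √(1 - s) * ∫ t in δ..1 / 2, 1 / ((t + (1 - s)) * √t) := by
        rw [integral_Icc_eq_intervalIntegral hδ', intervalIntegral.integral_const_mul]
    _ ≤ 4 / π ^ 2 / √(1 - s) * (π / √(1 - s)) := by
        gcongr
        exact integral_one_div_add_mul_sqrt_le hu hδ hδ'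
    _ = 4 / π * (1 - s)⁻¹ := by
        have := sqrt_pos.2 hu
        field_simp
        rw [sq_sqrt hu.le]

/-- Upper estimate: for `0 < δ ≤ 1/2`,
`∫_{δ}^{1/2} ∫_{1/2}^{1−δ} 1/(ts+(1−t)(1−s)) dμ(t) dμ(s) ≤ (16/π²)·ln(1/δ)`,
where `dμ(t) = dt/(π√(t(1−t)))`. -/
theorem kernel_double_integral_upper (δ : ℝ) (hδ : 0 < δ) (hδ' : δ ≤ 1 / 2) :
    ∫ s in Set.Icc (1 / 2 : ℝ) (1 - δ), ∫ t in Set.Icc δ (1 / 2 : ℝ),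
        (1 / (t * s + (1 - t) * (1 - s)))
          * (1 / (Real.pi * Real.sqrt (t * (1 - t))))
          * (1 / (Real.pi * Real.sqrt (s * (1 - s))))
      ≤ (16 / Real.pi ^ 2) * Real.log (1 / δ) := by
  have hhalf : (1 / 2 : ℝ) ≤ 1 - δ := by linarith
  calc _ ≤ ∫ s in Icc (1 / 2) (1 - δ), 4 / π * (1 - s)⁻¹ :=
        setIntegral_Icc_le_of_le
          (fun s hs => setIntegral_nonneg measurableSet_Icc fun t ht =>
            kernel_mul_arcsineDensity_nonneg (hδ.le.trans ht.1) (by linarith [ht.2])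
              (by linarith [hs.1]) (by linarith [hs.2]))
          (continuousOn_const.mul (ContinuousOn.inv₀ (by fun_prop) fun s hs =>
            (sub_pos.2 (by linarith [hs.2] : s < 1)).ne'))
          (fun s hs => setIntegral_kernel_mul_arcsineDensity_le hδ hδ' hs.1 (by linarith [hs.2]))
    _ = 4 / π * log (1 / 2 / δ) := by
        rw [integral_Icc_eq_intervalIntegral hhalf, intervalIntegral.integral_const_mul,
          integral_inv_one_sub (by linarith) hhalf]
        norm_num
    _ ≤ 4 / π * log (1 / δ) := by gcongr; norm_num
    _ ≤ 16 / π ^ 2 * log (1 / δ) := by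
        refine mul_le_mul_of_nonneg_right ?_ (log_nonneg ((one_le_div hδ).2 (by linarith)))
        rw [div_le_div_iff₀ pi_pos (by positivity)]
        nlinarith [pi_le_four, pi_pos]
end

section
/- For every real δ with 0 < δ < 1/8, ∫_{δ}^{1/2} ∫_{1/2}^{1−δ} 1/(t·s + (1−t)·(1−s)) dμ(t) dμ(s) ≥ (1/π²)·ln(1/(8δ)), where dμ(t) = dt/(π·√(t·(1−t))). -/
/-!
Write `u = 1 - s`. On the square, `ts + (1 - t)(1 - s) ≤ t + u ≤ 2 max(t, u)`, while
`√(t(1 - t)) ≤ √t` and `√(s(1 - s)) ≤ √u` are both at most `√(max(t, u))`; hence the integrand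
is at least `1 / (2π² max(t, u)²)`. Splitting at the diagonal, this minorant integrates exactly
over `[δ, 1/2]²` to `(log (1/(2δ)) - 1 + 2δ) / π²`, and `log 4 > 1` absorbs the constant.
-/

open MeasureTheory Real Set

section ProductCompact

variable {X Y : Type*} [TopologicalSpace X] [MeasurableSpace X] [OpensMeasurableSpace X]
  [T2Space X] [TopologicalSpace Y] [MeasurableSpace Y] [BorelSpace Y] [SecondCountableTopology Y]
  [T2Space Y] {μ : Measure X} {ν : Measure Y} [IsFiniteMeasureOnCompacts μ]
  [IsFiniteMeasureOnCompacts ν] [SFinite μ] [SFinite ν]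

theorem integrableOn_setIntegral_of_continuousOn {f : X → Y → ℝ} {s : Set X} {t : Set Y}
    (hs : IsCompact s) (ht : IsCompact t) (hf : ContinuousOn (Function.uncurry f) (s ×ˢ t)) :
    IntegrableOn (fun x => ∫ y in t, f x y ∂ν) s μ := by
  have hprod : Integrable (Function.uncurry f) ((μ.restrict s).prod (ν.restrict t)) := by
    rw [Measure.prod_restrict]
    exact hf.integrableOn_compact (hs.prod ht)
  exact hprod.integral_prod_left

theorem setIntegral_setIntegral_mono_of_continuousOn {f g : X → Y → ℝ} {s : Set X} {t : Set Y}
    (hs : IsCompact s) (ht : IsCompact t) (hf : ContinuousOn (Function.uncurry f) (s ×ˢ t))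
    (hg : ContinuousOn (Function.uncurry g) (s ×ˢ t)) (hfg : ∀ x ∈ s, ∀ y ∈ t, f x y ≤ g x y) :
    ∫ x in s, ∫ y in t, f x y ∂ν ∂μ ≤ ∫ x in s, ∫ y in t, g x y ∂ν ∂μ := by
  have slice {h : X → Y → ℝ} (hh : ContinuousOn (Function.uncurry h) (s ×ˢ t)) {x : X}
      (hx : x ∈ s) : IntegrableOn (h x) t ν :=
    (hh.comp (f := fun y => (x, y)) (by fun_prop) fun _ hy => ⟨hx, hy⟩).integrableOn_compact ht
  refine setIntegral_mono_on (integrableOn_setIntegral_of_continuousOn hs ht hf)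
    (integrableOn_setIntegral_of_continuousOn hs ht hg) hs.measurableSet fun x hx => ?_
  exact setIntegral_mono_on (slice hf hx) (slice hg hx) ht.measurableSet (hfg x hx)

end ProductCompact

theorem setIntegral_Icc_comp_sub_left (f : ℝ → ℝ) {a b : ℝ} (hab : a ≤ b) (d : ℝ) :
    ∫ x in Icc a b, f (d - x) = ∫ x in Icc (d - b) (d - a), f x := by
  rw [integral_Icc_eq_integral_Ioc, integral_Icc_eq_integral_Ioc,
    ← intervalIntegral.integral_of_le hab, ← intervalIntegral.integral_of_le (by linarith),
    intervalIntegral.integral_comp_sub_left]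

theorem kernel_denominator_le_two_mul_max {s t : ℝ} (hs : s ∈ Icc 0 1) (ht : t ∈ Icc 0 1) :
    t * s + (1 - t) * (1 - s) ≤ 2 * max t (1 - s) := by
  have h1 : t * s ≤ t := mul_le_of_le_one_right ht.1 hs.2
  have h2 : (1 - t) * (1 - s) ≤ 1 - s :=
    mul_le_of_le_one_left (by linarith [hs.2]) (by linarith [ht.1])
  linarith [le_max_left t (1 - s), le_max_right t (1 - s)]

theorem inv_two_mul_pi_sq_mul_max_sq_le {s t : ℝ} (hs : s ∈ Ioo 0 1) (ht : t ∈ Ioo 0 1) :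
    (2 * π ^ 2)⁻¹ * (max t (1 - s) ^ 2)⁻¹
      ≤ (1 / (t * s + (1 - t) * (1 - s)))
          * (1 / (π * √(t * (1 - t)))) * (1 / (π * √(s * (1 - s)))) := by
  obtain ⟨hs0, hs1⟩ := hs
  obtain ⟨ht0, ht1⟩ := ht
  set m := max t (1 - s)
  have hD : 0 < t * s + (1 - t) * (1 - s) := by positivity
  have hDm := kernel_denominator_le_two_mul_max ⟨hs0.le, hs1.le⟩ ⟨ht0.le, ht1.le⟩
  have hA : √(t * (1 - t)) ≤ √m :=
    Real.sqrt_le_sqrt ((mul_le_of_le_one_right ht0.le (by linarith)).trans (le_max_left _ _))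
  have hB : √(s * (1 - s)) ≤ √m :=
    Real.sqrt_le_sqrt ((mul_le_of_le_one_left (by linarith) hs1.le).trans (le_max_right _ _))
  have hm : (2 * m) * (π * √m) * (π * √m) = 2 * π ^ 2 * m ^ 2 := by
    linear_combination (2 * π ^ 2 * m) * Real.mul_self_sqrt (by positivity : 0 ≤ m)
  calc (2 * π ^ 2)⁻¹ * (m ^ 2)⁻¹
      = 1 / ((2 * m) * (π * √m) * (π * √m)) := by rw [hm, one_div, ← mul_inv]
    _ ≤ 1 / ((t * s + (1 - t) * (1 - s)) * (π * √(t * (1 - t))) * (π * √(s * (1 - s)))) := by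
        gcongr
    _ = _ := by rw [one_div_mul_one_div, one_div_mul_one_div]

theorem continuousOn_kernel :
    ContinuousOn (Function.uncurry fun s t : ℝ => (1 / (t * s + (1 - t) * (1 - s)))
      * (1 / (π * √(t * (1 - t)))) * (1 / (π * √(s * (1 - s))))) (Ioo 0 1 ×ˢ Ioo 0 1) := by
  rintro ⟨s, t⟩ ⟨⟨hs0, hs1⟩, ⟨ht0, ht1⟩⟩
  have : 0 < t * s + (1 - t) * (1 - s) := by nlinarith
  apply ContinuousAt.continuousWithinAt
  fun_prop (disch := first | positivity | (apply ne_of_gt; positivity))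

theorem intervalIntegral_inv_sq {a b : ℝ} (ha : 0 < a) (hab : a ≤ b) :
    ∫ t in a..b, (t ^ 2)⁻¹ = a⁻¹ - b⁻¹ := by
  have hpos {t : ℝ} (ht : t ∈ uIcc a b) : t ≠ 0 := by
    rw [uIcc_of_le hab] at ht; exact (ha.trans_le ht.1).ne'
  have hcont : ContinuousOn (fun t : ℝ => (t ^ 2)⁻¹) (uIcc a b) :=
    (continuousOn_id.pow 2).inv₀ fun t ht => pow_ne_zero 2 (hpos ht)
  rw [intervalIntegral.integral_eq_sub_of_hasDerivAt (f := fun t => -t⁻¹)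
    (fun t ht => by simpa using (hasDerivAt_inv (hpos ht)).fun_neg) hcont.intervalIntegrable]
  ring

theorem setIntegral_inv_max_sq {a b u : ℝ} (ha : 0 < a) (hau : a ≤ u) (hub : u ≤ b) :
    ∫ t in Icc a b, (max t u ^ 2)⁻¹ = 2 / u - a / u ^ 2 - 1 / b := by
  have hu : 0 < u := ha.trans_le hau
  have hcont : Continuous fun t => (max t u ^ 2)⁻¹ :=
    ((continuous_id.max continuous_const).pow 2).inv₀ fun t =>
      pow_ne_zero 2 (lt_max_of_lt_right hu).ne'
  rw [integral_Icc_eq_integral_Ioc, ← intervalIntegral.integral_of_le (hau.trans hub),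
    ← intervalIntegral.integral_add_adjacent_intervals (hcont.intervalIntegrable a u)
      (hcont.intervalIntegrable u b)]
  have hleft : ∫ t in a..u, (max t u ^ 2)⁻¹ = ∫ _ in a..u, (u ^ 2)⁻¹ :=
    intervalIntegral.integral_congr fun t ht => by
      rw [uIcc_of_le hau] at ht; simp only [max_eq_right ht.2]
  have hright : ∫ t in u..b, (max t u ^ 2)⁻¹ = ∫ t in u..b, (t ^ 2)⁻¹ :=
    intervalIntegral.integral_congr fun t ht => by
      rw [uIcc_of_le hub] at ht; simp only [max_eq_left ht.1]
  rw [hleft, hright, intervalIntegral.integral_const, intervalIntegral_inv_sq hu hub, smul_eq_mul]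
  field_simp
  ring

theorem setIntegral_setIntegral_inv_max_sq {a b : ℝ} (ha : 0 < a) (hab : a ≤ b) :
    ∫ u in Icc a b, ∫ t in Icc a b, (max t u ^ 2)⁻¹ = 2 * log (b / a) - 2 + 2 * a / b := by
  have hb : b ≠ 0 := (ha.trans_le hab).ne'
  have hpos {u : ℝ} (hu : u ∈ uIcc a b) : u ≠ 0 := by
    rw [uIcc_of_le hab] at hu; exact (ha.trans_le hu.1).ne'
  have hderiv (u : ℝ) (hu : u ∈ uIcc a b) :
      HasDerivAt (fun u => 2 * log u + a * u⁻¹ - u / b) (2 / u - a / u ^ 2 - 1 / b) u := by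
    refine ((((hasDerivAt_log (hpos hu)).const_mul 2).fun_add
      ((hasDerivAt_inv (hpos hu)).const_mul a)).fun_sub
        ((hasDerivAt_id' u).div_const b)).congr_deriv ?_
    ring
  have hcont : ContinuousOn (fun u => 2 / u - a / u ^ 2 - 1 / b) (uIcc a b) :=
    ((continuousOn_const.div continuousOn_id fun u hu => hpos hu).sub
      (continuousOn_const.div (continuousOn_id.pow 2) fun u hu => pow_ne_zero 2 (hpos hu))).sub
      continuousOn_const
  rw [setIntegral_congr_fun measurableSet_Icc fun u hu => setIntegral_inv_max_sq ha hu.1 hu.2,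
    integral_Icc_eq_integral_Ioc, ← intervalIntegral.integral_of_le hab,
    intervalIntegral.integral_eq_sub_of_hasDerivAt hderiv hcont.intervalIntegrable,
    log_div hb ha.ne']
  field_simp
  ring

theorem log_one_div_eight_mul_le {δ : ℝ} (hδ : 0 < δ) :
    log (1 / (8 * δ)) ≤ log (1 / 2 / δ) - 1 + 2 * δ := by
  have hsplit : log (1 / (8 * δ)) = log (1 / 2 / δ) - 2 * log 2 := by
    rw [show 1 / (8 * δ) = (1 / 2 / δ) / 2 ^ 2 by ring, log_div (by positivity) (by norm_num),
      log_pow, Nat.cast_ofNat]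
  linarith [log_two_gt_d9]

/-- Lower estimate: for `0 < δ < 1/8`,
`∫_{δ}^{1/2} ∫_{1/2}^{1−δ} 1/(ts+(1−t)(1−s)) dμ(t) dμ(s) ≥ (1/π²)·ln(1/(8δ))`,
where `dμ(t) = dt/(π√(t(1−t)))`. -/
theorem kernel_double_integral_lower (δ : ℝ) (hδ : 0 < δ) (hδ' : δ < 1 / 8) :
    (1 / Real.pi ^ 2) * Real.log (1 / (8 * δ))
      ≤ ∫ s in Set.Icc (1 / 2 : ℝ) (1 - δ), ∫ t in Set.Icc δ (1 / 2 : ℝ),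
          (1 / (t * s + (1 - t) * (1 - s)))
            * (1 / (Real.pi * Real.sqrt (t * (1 - t))))
            * (1 / (Real.pi * Real.sqrt (s * (1 - s)))) := by
  have hδ2 : δ ≤ 1 / 2 := by linarith
  have hrect : Icc (1 / 2 : ℝ) (1 - δ) ×ˢ Icc δ (1 / 2) ⊆ Ioo 0 1 ×ˢ Ioo 0 1 :=
    fun p ⟨⟨hs0, hs1⟩, ⟨ht0, ht1⟩⟩ => ⟨⟨by linarith, by linarith⟩, ⟨by linarith, by linarith⟩⟩
  have hlower : ContinuousOn (Function.uncurry fun s t : ℝ => (2 * π ^ 2)⁻¹ * (max t (1 - s) ^ 2)⁻¹)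
      (Icc (1 / 2 : ℝ) (1 - δ) ×ˢ Icc δ (1 / 2)) := by
    refine continuousOn_const.mul (ContinuousOn.inv₀ (by fun_prop) fun p hp => ?_)
    exact pow_ne_zero 2 (lt_max_of_lt_left (hδ.trans_le hp.2.1)).ne'
  calc (1 / π ^ 2) * log (1 / (8 * δ))
      ≤ (1 / π ^ 2) * (log (1 / 2 / δ) - 1 + 2 * δ) := by
        gcongr; exact log_one_div_eight_mul_le hδ
    _ = (2 * π ^ 2)⁻¹ * (2 * log (1 / 2 / δ) - 2 + 2 * δ / (1 / 2)) := by ring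
    _ = ∫ s in Icc (1 / 2 : ℝ) (1 - δ), ∫ t in Icc δ (1 / 2 : ℝ),
          (2 * π ^ 2)⁻¹ * (max t (1 - s) ^ 2)⁻¹ := by
        simp_rw [integral_const_mul]
        rw [setIntegral_Icc_comp_sub_left (fun u => ∫ t in Icc δ (1 / 2), (max t u ^ 2)⁻¹)
          (by linarith) 1, sub_sub_cancel, show (1 : ℝ) - 1 / 2 = 1 / 2 by norm_num,
          setIntegral_setIntegral_inv_max_sq hδ hδ2]
    _ ≤ _ := setIntegral_setIntegral_mono_of_continuousOn isCompact_Icc isCompact_Icc hlower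
        (continuousOn_kernel.mono hrect) fun s hs t ht =>
          have hst : (s, t) ∈ Ioo 0 1 ×ˢ Ioo 0 1 := hrect ⟨hs, ht⟩
          inv_two_mul_pi_sq_mul_max_sq_le hst.1 hst.2
end

section
/- Let H be a Hilbert space, let a₁, …, aₙ be bounded operators on H, and let P₁, …, Pₙ be mutually orthogonal orthogonal projections on H such that (1 − P_k)·a_k·(1 − P_k) = 0 for each k. Then ‖Σ_{k=1}^{n} a_k‖ ≤ max_{k} ‖a_k‖ + ‖Σ_{k=1}^{n} (1 − P_k)·a_k·a_k*·(1 − P_k)‖^{1/2} + ‖Σ_{k=1}^{n} (1 − P_k)·a_k*·a_k·(1 − P_k)‖^{1/2}. -/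
/-!
Split `a = p a p + (1 - p) a p + p a (1 - p)`, which is exact because the corner
`(1 - p) a (1 - p)` vanishes. The compressions `P_k a_k P_k` act on mutually orthogonal
subspaces, so by Pythagoras their sum has norm at most `max_k ‖a_k‖`. The terms
`x_k = (1 - P_k) a_k P_k` satisfy `x_j x_k* = 0` for `j ≠ k`, so the C*-identity gives
`‖Σ x_k‖² = ‖Σ x_k x_k*‖`, the row square function. The terms `P_k a_k (1 - P_k)` are the
adjoints of the row terms of `a_k*`, which gives the column square function.
-/

open scoped InnerProductSpace

theorem sum_mul_sum_eq_sum_mul_of_ne {ι R : Type*} [Fintype ι] [NonUnitalNonAssocSemiring R]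
    (f g : ι → R) (h : ∀ j k, j ≠ k → f j * g k = 0) :
    (∑ j, f j) * (∑ k, g k) = ∑ k, f k * g k := by
  rw [Finset.sum_mul_sum]
  exact Fintype.sum_congr _ _ fun j => Fintype.sum_eq_single j fun k hk => h j k hk.symm

theorem IsStarProjection.sum {ι R : Type*} [NonUnitalNonAssocSemiring R] [StarRing R]
    {p : ι → R} (hp : ∀ i, IsStarProjection (p i)) (h : ∀ i j, i ≠ j → p i * p j = 0)
    (s : Finset ι) : IsStarProjection (∑ i ∈ s, p i) := by
  classical
  induction s using Finset.induction_on with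
  | empty => simp
  | insert i s hi ih =>
    rw [Finset.sum_insert hi]
    refine (hp i).add ih ?_
    rw [Finset.mul_sum]
    exact Finset.sum_eq_zero fun j hj => h i j (ne_of_mem_of_not_mem hj hi).symm

section Corners

variable {R : Type*} [Ring R]

theorem eq_add_add_of_one_sub_mul_mul_one_sub_eq_zero {p a : R}
    (h : (1 - p) * a * (1 - p) = 0) :
    a = p * a * p + (1 - p) * a * p + p * a * (1 - p) := by
  calc a = p * a * p + (1 - p) * a * p + p * a * (1 - p) + (1 - p) * a * (1 - p) := by
        noncomm_ring
    _ = _ := by rw [h, add_zero]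

theorem one_sub_mul_mul_eq_of_one_sub_mul_mul_one_sub_eq_zero {p a : R}
    (h : (1 - p) * a * (1 - p) = 0) : (1 - p) * a * p = (1 - p) * a := by
  rw [mul_sub, mul_one, sub_eq_zero] at h
  exact h.symm

variable [StarRing R] {ι : Type*} {P a : ι → R}

theorem one_sub_mul_mul_mul_star_eq_zero (hP : ∀ k, IsSelfAdjoint (P k))
    (horth : ∀ j k, j ≠ k → P j * P k = 0) {j k : ι} (hjk : j ≠ k) :
    (1 - P j) * a j * P j * star ((1 - P k) * a k * P k) = 0 := by
  simp only [star_mul, star_sub, star_one, (hP k).star_eq]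
  calc _ = (1 - P j) * a j * (P j * P k) * (star (a k) * (1 - P k)) := by noncomm_ring
    _ = 0 := by rw [horth j k hjk, mul_zero, zero_mul]

end Corners

section CStarRing

variable {ι A : Type*} [Fintype ι] [NormedRing A] [StarRing A] [CStarRing A] {P a : ι → A}

theorem norm_sum_eq_sqrt_norm_sum_mul_star {x : ι → A}
    (h : ∀ j k, j ≠ k → x j * star (x k) = 0) :
    ‖∑ k, x k‖ = √‖∑ k, x k * star (x k)‖ := by
  rw [← sum_mul_sum_eq_sum_mul_of_ne _ _ h, ← star_sum, CStarRing.norm_self_mul_star,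
    Real.sqrt_mul_self (norm_nonneg _)]

theorem norm_sum_one_sub_mul_mul_eq_sqrt (hP : ∀ k, IsSelfAdjoint (P k))
    (horth : ∀ j k, j ≠ k → P j * P k = 0)
    (hmean : ∀ k, (1 - P k) * a k * (1 - P k) = 0) :
    ‖∑ k, (1 - P k) * a k * P k‖ = √‖∑ k, (1 - P k) * a k * star (a k) * (1 - P k)‖ := by
  rw [norm_sum_eq_sqrt_norm_sum_mul_star fun j k => one_sub_mul_mul_mul_star_eq_zero hP horth]
  congr 3
  ext k
  rw [one_sub_mul_mul_eq_of_one_sub_mul_mul_one_sub_eq_zero (hmean k), star_mul, star_sub,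
    star_one, (hP k).star_eq, ← mul_assoc]

theorem norm_sum_mul_mul_one_sub_eq_sqrt (hP : ∀ k, IsSelfAdjoint (P k))
    (horth : ∀ j k, j ≠ k → P j * P k = 0) (hmean : ∀ k, (1 - P k) * a k * (1 - P k) = 0) :
    ‖∑ k, P k * a k * (1 - P k)‖ = √‖∑ k, (1 - P k) * star (a k) * a k * (1 - P k)‖ := by
  have hmean_star : ∀ k, (1 - P k) * star (a k) * (1 - P k) = 0 := fun k => by
    simpa [star_mul, (hP k).star_eq, mul_assoc] using congr(star $(hmean k))
  calc ‖∑ k, P k * a k * (1 - P k)‖ = ‖star (∑ k, (1 - P k) * star (a k) * P k)‖ := by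
        simp [star_sum, star_mul, (hP _).star_eq, mul_assoc]
    _ = _ := by
        rw [norm_star, norm_sum_one_sub_mul_mul_eq_sqrt hP horth hmean_star]
        simp_rw [star_star]

end CStarRing

section InnerProductSpace

variable {ι 𝕜 E : Type*} [Fintype ι] [RCLike 𝕜] [NormedAddCommGroup E] [InnerProductSpace 𝕜 E]

theorem norm_sum_sq_eq_sum_norm_sq_of_inner_eq_zero {v : ι → E}
    (h : ∀ j k, j ≠ k → ⟪v j, v k⟫_𝕜 = 0) :
    ‖∑ k, v k‖ ^ 2 = ∑ k, ‖v k‖ ^ 2 := by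
  have hinner : ⟪∑ j, v j, ∑ k, v k⟫_𝕜 = ∑ k, ⟪v k, v k⟫_𝕜 := by
    simp_rw [sum_inner, inner_sum]
    exact Fintype.sum_congr _ _ fun j => Fintype.sum_eq_single j fun k hk => h j k hk.symm
  simp only [inner_self_eq_norm_sq_to_K] at hinner
  exact_mod_cast hinner

variable [CompleteSpace E]

theorem inner_apply_apply_eq_zero_of_mul_eq_zero {p q : E →L[𝕜] E} (hp : IsSelfAdjoint p)
    (hpq : p * q = 0) (u w : E) : ⟪p u, q w⟫_𝕜 = 0 :=
  calc ⟪p u, q w⟫_𝕜 = ⟪u, (p * q) w⟫_𝕜 := hp.isSymmetric u (q w)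
    _ = 0 := by rw [hpq, zero_apply, inner_zero_right]

variable {P : ι → E →L[𝕜] E} (hP : ∀ k, IsStarProjection (P k))
  (horth : ∀ j k, j ≠ k → P j * P k = 0)
include hP horth

theorem sum_norm_sq_apply_le (x : E) : ∑ k, ‖P k x‖ ^ 2 ≤ ‖x‖ ^ 2 := by
  rw [← norm_sum_sq_eq_sum_norm_sq_of_inner_eq_zero fun j k hjk =>
    inner_apply_apply_eq_zero_of_mul_eq_zero (hP j).isSelfAdjoint (horth j k hjk) x x,
    ← sum_apply]
  gcongr
  simpa using (∑ k, P k).le_of_opNorm_le ((IsStarProjection.sum hP horth _).norm_le _) x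

theorem norm_sum_mul_mul_le_iSup_norm (b : ι → E →L[𝕜] E) :
    ‖∑ k, P k * b k * P k‖ ≤ ⨆ k, ‖b k‖ := by
  set M := ⨆ k, ‖b k‖
  have hM : 0 ≤ M := Real.iSup_nonneg fun k => norm_nonneg _
  have hbM : ∀ k, ‖b k‖ ≤ M := le_ciSup (Set.finite_range _).bddAbove
  refine ContinuousLinearMap.opNorm_le_bound _ hM fun x => ?_
  refine le_of_pow_le_pow_left₀ two_ne_zero (by positivity) ?_
  calc ‖(∑ k, P k * b k * P k) x‖ ^ 2 = ∑ k, ‖P k (b k (P k x))‖ ^ 2 := by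
        rw [sum_apply]
        exact norm_sum_sq_eq_sum_norm_sq_of_inner_eq_zero fun j k hjk =>
          inner_apply_apply_eq_zero_of_mul_eq_zero (hP j).isSelfAdjoint (horth j k hjk) _ _
    _ ≤ ∑ k, (M * ‖P k x‖) ^ 2 := by
        gcongr with k
        calc ‖P k (b k (P k x))‖ ≤ 1 * ‖b k (P k x)‖ :=
              (P k).le_of_opNorm_le ((hP k).norm_le _) _
          _ ≤ ‖b k‖ * ‖P k x‖ := by rw [one_mul]; exact (b k).le_opNorm _
          _ ≤ M * ‖P k x‖ := by gcongr; exact hbM k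
    _ = M ^ 2 * ∑ k, ‖P k x‖ ^ 2 := by simp_rw [mul_pow, Finset.mul_sum]
    _ ≤ M ^ 2 * ‖x‖ ^ 2 := by gcongr; exact sum_norm_sq_apply_le hP horth x
    _ = (M * ‖x‖) ^ 2 := by ring

end InnerProductSpace

/-- Operator-theoretic core of the operator-valued Voiculescu inequality:
if `P₁,…,Pₙ` are mutually orthogonal orthogonal projections on a Hilbert
space `H` and `(1−P_k)·a_k·(1−P_k) = 0` for each `k`, then
`‖Σ a_k‖ ≤ max_k ‖a_k‖ + ‖Σ (1−P_k) a_k a_k* (1−P_k)‖^{1/2}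
  + ‖Σ (1−P_k) a_k* a_k (1−P_k)‖^{1/2}`. -/
theorem voiculescu_operator_inequality {H : Type*} [NormedAddCommGroup H]
    [InnerProductSpace ℂ H] [CompleteSpace H] (n : ℕ)
    (a P : Fin n → (H →L[ℂ] H))
    (hsa : ∀ k, IsSelfAdjoint (P k))
    (hidem : ∀ k, IsIdempotentElem (P k))
    (horth : ∀ j k, j ≠ k → P j * P k = 0)
    (hmean : ∀ k, (1 - P k) * a k * (1 - P k) = 0) :
    ‖∑ k, a k‖ ≤ (⨆ k, ‖a k‖)
      + Real.sqrt ‖∑ k, (1 - P k) * a k * star (a k) * (1 - P k)‖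
      + Real.sqrt ‖∑ k, (1 - P k) * star (a k) * a k * (1 - P k)‖ := by
  have hP : ∀ k, IsStarProjection (P k) := fun k => ⟨hidem k, hsa k⟩
  calc ‖∑ k, a k‖
      = ‖∑ k, P k * a k * P k + ∑ k, (1 - P k) * a k * P k + ∑ k, P k * a k * (1 - P k)‖ := by
        simp_rw [← Finset.sum_add_distrib,
          ← eq_add_add_of_one_sub_mul_mul_one_sub_eq_zero (hmean _)]
    _ ≤ ‖∑ k, P k * a k * P k‖ + ‖∑ k, (1 - P k) * a k * P k‖
          + ‖∑ k, P k * a k * (1 - P k)‖ := norm_add₃_le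
    _ ≤ _ := by
        rw [norm_sum_one_sub_mul_mul_eq_sqrt hsa horth hmean,
          norm_sum_mul_mul_one_sub_eq_sqrt hsa horth hmean]
        gcongr
        exact norm_sum_mul_mul_le_iSup_norm hP horth a
end

section
/- Let H be a Hilbert space and P₁, …, Pₙ mutually orthogonal orthogonal projections on H, and b₁, …, bₙ bounded operators on H. Then ‖Σ_{k=1}^{n} (1 − P_k)·b_k·P_k‖² ≤ ‖Σ_{k=1}^{n} (1 − P_k)·b_k·b_k*·(1 − P_k)‖. -/
/-- Column estimate: if `P₁,…,Pₙ` are mutually orthogonal orthogonal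
projections on a Hilbert space `H` and `b₁,…,bₙ` are bounded operators, then
`‖Σ (1−P_k) b_k P_k‖² ≤ ‖Σ (1−P_k) b_k b_k* (1−P_k)‖`. -/
theorem column_square_estimate {H : Type*} [NormedAddCommGroup H]
    [InnerProductSpace ℂ H] [CompleteSpace H] (n : ℕ)
    (b P : Fin n → (H →L[ℂ] H))
    (hsa : ∀ k, IsSelfAdjoint (P k))
    (hidem : ∀ k, IsIdempotentElem (P k))
    (horth : ∀ j k, j ≠ k → P j * P k = 0) :
    ‖∑ k, (1 - P k) * b k * P k‖ ^ 2
      ≤ ‖∑ k, (1 - P k) * b k * star (b k) * (1 - P k)‖ := by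
  set S : H →L[ℂ] H := ∑ k, (1 - P k) * b k * P k with hS
  have hstarP : ∀ k, star (P k) = P k := fun k => (hsa k).star_eq
  have hQ : ∀ k, star ((1 : H →L[ℂ] H) - P k) = 1 - P k := fun k => by
    simp [star_sub, hstarP k]
  have hp' : ∀ k (x : H →L[ℂ] H), P k * (P k * x) = P k * x := fun k x => by
    rw [← mul_assoc, hidem k]
  -- Compute S * star S as the diagonal sum
  have hSS : S * star S
      = ∑ k, ((1 - P k) * b k * P k) * star ((1 - P k) * b k * P k) := by
    rw [hS, star_sum, Finset.sum_mul_sum]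
    apply Finset.sum_congr rfl
    intro j _
    rw [Finset.sum_eq_single j]
    · intro k _ hkj
      have h0 : P j * P k = 0 := horth j k (Ne.symm hkj)
      simp only [star_mul, hstarP, hQ, mul_assoc]
      rw [← mul_assoc (P j) (P k), h0]
      simp
    · intro h; exact absurd (Finset.mem_univ j) h
  -- termwise decomposition
  have term_eq : ∀ k, (1 - P k) * b k * star (b k) * (1 - P k)
      = ((1 - P k) * b k * P k) * star ((1 - P k) * b k * P k)
        + ((1 - P k) * b k * (1 - P k)) * star ((1 - P k) * b k * (1 - P k)) := by
    intro k
    have hq : ((1 : H →L[ℂ] H) - P k) * (1 - P k) = 1 - P k :=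
      (hidem k).one_sub
    have hq' : ∀ x : H →L[ℂ] H, (1 - P k) * ((1 - P k) * x) = (1 - P k) * x :=
      fun x => by rw [← mul_assoc, hq]
    simp only [star_mul, hstarP, hQ, mul_assoc, hp', hq']
    rw [← mul_add, ← mul_add, ← add_mul]
    have : P k + (1 - P k) = (1 : H →L[ℂ] H) := by abel
    rw [this, one_mul]
  have hT : (∑ k, (1 - P k) * b k * star (b k) * (1 - P k))
      = S * star S + ∑ k, ((1 - P k) * b k * (1 - P k)) * star ((1 - P k) * b k * (1 - P k)) := by
    rw [hSS, ← Finset.sum_add_distrib]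
    exact Finset.sum_congr rfl fun k _ => term_eq k
  have hnonneg : (0 : H →L[ℂ] H) ≤ S * star S := mul_star_self_nonneg S
  have hle : S * star S ≤ ∑ k, (1 - P k) * b k * star (b k) * (1 - P k) := by
    rw [hT]
    exact le_add_of_nonneg_right <| Finset.sum_nonneg fun k _ => mul_star_self_nonneg _
  calc ‖S‖ ^ 2 = ‖S * star S‖ := by
        rw [sq, ← CStarRing.norm_self_mul_star]
    _ ≤ _ := CStarAlgebra.norm_le_norm_of_nonneg_of_le hnonneg hle
end
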